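/- Let B be an abelian group and let Γ₂B, Γ₃B denote the degree-2 and degree-3 homogeneous components of the divided power algebra of the ℤ-module B, with γₙ(x) the n-th divided power of x ∈ B. There is a unique homomorphism Γ₃B → B/3B sending γ₃(x) to x + 3B for every x ∈ B; it is surjective, and its kernel is exactly the image of the multiplication map Γ₂B ⊗ B → Γ₃B sending γ₂(x) ⊗ y to the product γ₂(x)·γ₁(y). Equivalently, the sequence Γ₂B ⊗ B → Γ₃B → B/3B → 0 is exact. -/

import Mathlib

set_option synthInstance.maxHeartbeats 1000000
set_option maxHeartbeats 1000000

open MvPolynomial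

/-- The defining relations of the divided power algebra of the `ℤ`-module `B`: the
variable `X (n, x)` represents the `n`-th divided power `γₙ(x)` of `x : B`. -/
inductive DividedPowerRel (B : Type) [AddCommGroup B] :
    MvPolynomial (ℕ × B) ℤ → MvPolynomial (ℕ × B) ℤ → Prop
  | zero (x : B) : DividedPowerRel B (X (0, x)) 1
  | smul (k : ℤ) (n : ℕ) (x : B) :
      DividedPowerRel B (X (n, k • x)) (k ^ n • X (n, x))
  | add (n : ℕ) (x y : B) :
      DividedPowerRel B (X (n, x + y))
        (∑ i ∈ Finset.range (n + 1), X (i, x) * X (n - i, y))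
  | mul (m n : ℕ) (x : B) :
      DividedPowerRel B (X (m, x) * X (n, x)) ((m + n).choose m • X (m + n, x))

/-- The divided power algebra `Γ_*(B)` of the `ℤ`-module `B`. -/
noncomputable abbrev DividedPowerAlgebra' (B : Type) [AddCommGroup B] : Type :=
  RingQuot (DividedPowerRel B)

variable (B : Type) [AddCommGroup B]

/-- `dp B n x` is the `n`-th divided power generator `γₙ(x)` of the divided power
algebra of `B`. -/
noncomputable def dp (n : ℕ) (x : B) : DividedPowerAlgebra' B :=
  RingQuot.mkAlgHom ℤ (DividedPowerRel B) (X (n, x))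

/-- The degree-`n` homogeneous component `ΓₙB` of the divided power algebra of `B`,
for its natural grading (in which `γₙ(x)` is homogeneous of degree `n`). -/
noncomputable def dpGrade (n : ℕ) : Submodule ℤ (DividedPowerAlgebra' B) :=
  Submodule.map (RingQuot.mkAlgHom ℤ (DividedPowerRel B)).toLinearMap
    (weightedHomogeneousSubmodule ℤ (Prod.fst : ℕ × B → ℕ) n)

theorem dp_mem_dpGrade (n : ℕ) (x : B) : dp B n x ∈ dpGrade B n :=
  ⟨X (n, x), isWeightedHomogeneous_X ℤ _ _, rfl⟩

theorem dp_mul_dp_mem_dpGrade (m n : ℕ) (x y : B) :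
    dp B m x * dp B n y ∈ dpGrade B (m + n) :=
  ⟨X (m, x) * X (n, y),
    (isWeightedHomogeneous_X ℤ _ _).mul (isWeightedHomogeneous_X ℤ _ _),
    by simp [dp]; exact map_mul (RingQuot.mkAlgHom ℤ (DividedPowerRel B)) _ _⟩

/-- The quotient `B/3B` of `B` by the subgroup of elements `3x`. -/
abbrev modThree : Type :=
  B ⧸ LinearMap.range ((3 : ℤ) • (LinearMap.id : B →ₗ[ℤ] B))

-- ### auxiliary development

namespace DPA

noncomputable instance : Module ℤᵐᵒᵖ (modThree B) :=
  Module.compHom (modThree B) ((RingHom.id ℤ).fromOpposite mul_comm)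

instance : IsCentralScalar ℤ (modThree B) := ⟨fun _ _ => rfl⟩

lemma three_smul_modThree (c : modThree B) : (3 : ℤ) • c = 0 := by
  obtain ⟨z, rfl⟩ := Submodule.Quotient.mk_surjective _ c
  rw [← Submodule.Quotient.mk_smul, Submodule.Quotient.mk_eq_zero]
  exact ⟨z, rfl⟩

lemma mk_three_smul (z : B) :
    (Submodule.Quotient.mk ((3 : ℤ) • z) :
      modThree B) = 0 := by
  rw [Submodule.Quotient.mk_eq_zero]; exact ⟨z, rfl⟩

/-- generator images in the trivial square-zero extension -/
noncomputable def fgen : ℕ × B → TrivSqZeroExt ℤ (modThree B) := fun p =>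
  if p.1 = 0 then 1
  else TrivSqZeroExt.inr (if p.1 = 3 then Submodule.Quotient.mk p.2 else 0)

lemma fgen_zero (x : B) : fgen B (0, x) = 1 := rfl

lemma fgen_three (x : B) :
    fgen B (3, x) = TrivSqZeroExt.inr (Submodule.Quotient.mk x) := rfl

lemma fgen_add (n : ℕ) (hn : n ≠ 0) (x y : B) :
    fgen B (n, x + y) = fgen B (n, x) + fgen B (n, y) := by
  simp only [fgen, if_neg hn]
  split_ifs with h
  · rw [← TrivSqZeroExt.inr_add, ← Submodule.Quotient.mk_add]
  · rw [← TrivSqZeroExt.inr_add, add_zero]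

lemma fgen_mul (i j : ℕ) (hi : i ≠ 0) (hj : j ≠ 0) (x y : B) :
    fgen B (i, x) * fgen B (j, y) = 0 := by
  simp only [fgen, if_neg hi, if_neg hj]
  exact TrivSqZeroExt.inr_mul_inr ℤ _ _

lemma three_dvd (k : ℤ) : (3 : ℤ) ∣ k ^ 3 - k := by
  obtain ⟨m, hm | hm | hm⟩ : ∃ m, k = 3*m ∨ k = 3*m+1 ∨ k = 3*m+2 := ⟨k/3, by omega⟩
  · exact ⟨9*m^3 - m, by subst hm; ring⟩
  · exact ⟨9*m^3 + 9*m^2 + 2*m, by subst hm; ring⟩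
  · exact ⟨9*m^3 + 18*m^2 + 11*m + 2, by subst hm; ring⟩


lemma fgen_smul_aux (k : ℤ) (n : ℕ) (x : B) :
    fgen B (n, k • x) = k ^ n • fgen B (n, x) := by
  rcases Nat.eq_zero_or_pos n with hn | hn
  · subst hn; simp [fgen]
  by_cases h3 : n = 3
  · subst h3
    rw [fgen_three, fgen_three, ← TrivSqZeroExt.inr_smul]
    congr 1
    rw [← Submodule.Quotient.mk_smul, Submodule.Quotient.eq]
    obtain ⟨t, ht⟩ := three_dvd k
    refine ⟨(-t) • x, ?_⟩
    show ((3:ℤ) • (LinearMap.id : B →ₗ[ℤ] B)) ((-t) • x) = k • x - k ^ 3 • x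
    rw [LinearMap.smul_apply, LinearMap.id_apply, smul_smul, ← sub_smul]
    congr 1
    linarith
  · have h0 : n ≠ 0 := by omega
    have hz : ∀ z : B, fgen B (n, z) = 0 := fun z => by
      simp [fgen, if_neg h0, if_neg h3]
    rw [hz, hz, smul_zero]

lemma aeval_rel : ∀ ⦃p q : MvPolynomial (ℕ × B) ℤ⦄, DividedPowerRel B p q →
    aeval (fgen B) p = aeval (fgen B) q := by
  intro p q h
  induction h with
  | zero x => simp [fgen_zero]
  | smul k n x =>
      rw [map_zsmul, aeval_X, aeval_X, fgen_smul_aux]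
  | add n x y =>
      rw [aeval_X, map_sum]
      simp only [map_mul, aeval_X]
      rcases Nat.eq_zero_or_pos n with hn | hn
      · subst hn; simp [fgen_zero]
      · have hn' : n ≠ 0 := by omega
        rw [fgen_add B n hn']
        have : ∀ i ∈ Finset.range (n+1),
            fgen B (i, x) * fgen B (n - i, y) =
              (if i = 0 then fgen B (n, y) else 0) +
              (if i = n then fgen B (n, x) else 0) := by
          intro i hi
          rcases eq_or_ne i 0 with rfl | hi0
          · rw [Nat.sub_zero, fgen_zero, one_mul, if_pos rfl, if_neg (by omega), add_zero]
          rcases eq_or_ne i n with rfl | hin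
          · rw [Nat.sub_self, fgen_zero, mul_one, if_neg hi0, if_pos rfl, zero_add]
          · have hle : i ≤ n := by simp at hi; omega
            have hni : n - i ≠ 0 := by omega
            rw [fgen_mul B i (n - i) hi0 hni, if_neg hi0, if_neg hin, add_zero]
        rw [Finset.sum_congr rfl this, Finset.sum_add_distrib,
          Finset.sum_ite_eq' (Finset.range (n+1)) 0, Finset.sum_ite_eq' (Finset.range (n+1)) n,
          if_pos (by simp), if_pos (by simp)]
        exact add_comm _ _
  | mul m n x =>
      rw [map_nsmul, map_mul, aeval_X, aeval_X, aeval_X]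
      rcases Nat.eq_zero_or_pos m with hm | hm
      · subst hm; rw [fgen_zero, one_mul, zero_add, Nat.choose_zero_right, one_smul]
      rcases Nat.eq_zero_or_pos n with hn | hn
      · subst hn; rw [fgen_zero, mul_one, add_zero, Nat.choose_self, one_smul]
      have hm0 : m ≠ 0 := by omega
      have hn0 : n ≠ 0 := by omega
      rw [fgen_mul B m n hm0 hn0]
      by_cases h3 : m + n = 3
      · rw [h3]
        have hch : (3).choose m = 3 := by
          have : m = 1 ∨ m = 2 := by omega
          rcases this with rfl | rfl <;> rfl
        have hz : ((3:ℕ):ℤ) • (Submodule.Quotient.mk x : modThree B) = 0 := by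
          push_cast; exact three_smul_modThree B _
        rw [hch, fgen_three, ← Nat.cast_smul_eq_nsmul ℤ, ← TrivSqZeroExt.inr_smul, hz,
          TrivSqZeroExt.inr_zero]
      · have hmn0 : m + n ≠ 0 := by omega
        have : fgen B (m + n, x) = 0 := by
          simp only [fgen]
          rw [if_neg hmn0, if_neg h3, TrivSqZeroExt.inr_zero]
        rw [this, smul_zero]


/-- the algebra map `Γ(B) → ℤ ⊕ B/3B` -/
noncomputable def psi : DividedPowerAlgebra' B →ₐ[ℤ] TrivSqZeroExt ℤ (modThree B) :=
  RingQuot.liftAlgHom ℤ ⟨aeval (fgen B), aeval_rel B⟩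

lemma psi_dp (n : ℕ) (x : B) : psi B (dp B n x) = fgen B (n, x) := by
  rw [psi, dp, RingQuot.liftAlgHom_mkAlgHom_apply, aeval_X]

lemma psi_dp_one (y : B) : psi B (dp B 1 y) = 0 := by
  rw [psi_dp]
  simp only [fgen]
  norm_num

/-- the canonical map `Γ₃B → B/3B` -/
noncomputable def gmap : dpGrade B 3 →ₗ[ℤ] modThree B :=
  (TrivSqZeroExt.sndHom ℤ (modThree B)).comp
    ((psi B).toLinearMap.comp (dpGrade B 3).subtype)

lemma gmap_dp3 (x : B) (h : dp B 3 x ∈ dpGrade B 3) :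
    gmap B ⟨dp B 3 x, h⟩ = Submodule.Quotient.mk x := by
  show (psi B (dp B 3 x)).snd = _
  simp [gmap, psi_dp, fgen_three]

lemma gmap_dp21 (x y : B) (h : dp B 2 x * dp B 1 y ∈ dpGrade B 3) :
    gmap B ⟨dp B 2 x * dp B 1 y, h⟩ = 0 := by
  show (psi B (dp B 2 x * dp B 1 y)).snd = 0
  simp [gmap, map_mul, psi_dp_one]

-- basic identities in the divided power algebra

lemma dp_zero (x : B) : dp B 0 x = 1 := by
  have := RingQuot.mkAlgHom_rel ℤ (DividedPowerRel.zero x)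
  simpa [dp] using this

lemma dp_smul (k : ℤ) (n : ℕ) (x : B) : dp B n (k • x) = k ^ n • dp B n x := by
  have := RingQuot.mkAlgHom_rel ℤ (DividedPowerRel.smul k n x)
  simpa [dp, map_zsmul] using this

lemma dp_add (n : ℕ) (x y : B) :
    dp B n (x + y) = ∑ i ∈ Finset.range (n + 1), dp B i x * dp B (n - i) y := by
  have := RingQuot.mkAlgHom_rel ℤ (DividedPowerRel.add n x y)
  simpa [dp, map_sum, map_mul] using this

lemma dp_mul (m n : ℕ) (x : B) :
    dp B m x * dp B n x = (m + n).choose m • dp B (m + n) x := by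
  have := RingQuot.mkAlgHom_rel ℤ (DividedPowerRel.mul m n x)
  simpa [dp, map_mul, map_nsmul] using this

lemma dp_one_add (x y : B) : dp B 1 (x + y) = dp B 1 x + dp B 1 y := by
  rw [dp_add]
  simp [Finset.sum_range_succ, dp_zero, add_comm]

lemma dp_two_add (x y : B) :
    dp B 2 (x + y) = dp B 2 y + dp B 1 x * dp B 1 y + dp B 2 x := by
  rw [dp_add]
  simp [Finset.sum_range_succ, dp_zero]

lemma dp_three_add (x y : B) :
    dp B 3 (x + y) = dp B 3 y + dp B 1 x * dp B 2 y + dp B 2 x * dp B 1 y + dp B 3 x := by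
  rw [dp_add]
  simp [Finset.sum_range_succ, dp_zero]

lemma dp_one_mul_one (x y : B) :
    dp B 1 x * dp B 1 y = dp B 2 (x + y) - dp B 2 x - dp B 2 y := by
  rw [dp_two_add]; ring

lemma dp_one_mul_two (x : B) : dp B 1 x * dp B 2 x = 3 • dp B 3 x := by
  have := dp_mul B 1 2 x
  norm_num at this
  rw [this]
  norm_num

/-- the spanning filtration -/
noncomputable def SGen : ℕ → Set (DividedPowerAlgebra' B)
  | 0 => {1}
  | 1 => Set.range (dp B 1)
  | 2 => Set.range (dp B 2)
  | 3 => Set.range (dp B 3) ∪ {z | ∃ x y, z = dp B 2 x * dp B 1 y}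
  | _ => Set.univ

noncomputable def S (n : ℕ) : Submodule ℤ (DividedPowerAlgebra' B) :=
  Submodule.span ℤ (SGen B n)


lemma one_mem_S0 : (1 : DividedPowerAlgebra' B) ∈ S B 0 :=
  Submodule.subset_span rfl

lemma dp1_mem_S1 (x : B) : dp B 1 x ∈ S B 1 :=
  Submodule.subset_span ⟨x, rfl⟩

lemma dp2_mem_S2 (x : B) : dp B 2 x ∈ S B 2 :=
  Submodule.subset_span ⟨x, rfl⟩

lemma dp3_mem_S3 (x : B) : dp B 3 x ∈ S B 3 :=
  Submodule.subset_span (Or.inl ⟨x, rfl⟩)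

lemma dp21_mem_S3 (x y : B) : dp B 2 x * dp B 1 y ∈ S B 3 :=
  Submodule.subset_span (Or.inr ⟨x, y, rfl⟩)

lemma S0_mul_mem {u : DividedPowerAlgebra' B} (hu : u ∈ S B 0) (v : DividedPowerAlgebra' B)
    {N : Submodule ℤ (DividedPowerAlgebra' B)} (hv : v ∈ N) : u * v ∈ N := by
  rw [S, SGen, Submodule.mem_span_singleton] at hu
  obtain ⟨c, rfl⟩ := hu
  rw [smul_mul_assoc, one_mul]
  exact N.smul_mem c hv

lemma S_mul {a b : ℕ} (hab : a + b ≤ 3) {u v : DividedPowerAlgebra' B}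
    (hu : u ∈ S B a) (hv : v ∈ S B b) : u * v ∈ S B (a + b) := by
  induction hu using Submodule.span_induction with
  | zero => rw [zero_mul]; exact Submodule.zero_mem _
  | add u₁ u₂ _ _ h1 h2 => rw [add_mul]; exact Submodule.add_mem _ h1 h2
  | smul c u₁ _ h1 => rw [smul_mul_assoc]; exact Submodule.smul_mem _ c h1
  | mem u hu =>
    induction hv using Submodule.span_induction with
    | zero => rw [mul_zero]; exact Submodule.zero_mem _
    | add v₁ v₂ _ _ h1 h2 => rw [mul_add]; exact Submodule.add_mem _ h1 h2
    | smul c v₁ _ h1 => rw [mul_smul_comm]; exact Submodule.smul_mem _ c h1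
    | mem v hv =>
      -- now u ∈ SGen a, v ∈ SGen b, a + b ≤ 3
      have ha3 : a ≤ 3 := by omega
      interval_cases a
      · rcases hu with rfl
        rw [Nat.zero_add, one_mul]
        exact Submodule.subset_span hv
      · have hb2 : b ≤ 2 := by omega
        interval_cases b
        · rcases hv with rfl
          rw [mul_one]
          exact Submodule.subset_span hu
        · -- 1 * 1
          obtain ⟨x, rfl⟩ := hu; obtain ⟨y, rfl⟩ := hv
          rw [dp_one_mul_one]
          exact Submodule.sub_mem _ (Submodule.sub_mem _ (dp2_mem_S2 B _) (dp2_mem_S2 B _))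
            (dp2_mem_S2 B _)
        · -- 1 * 2
          obtain ⟨x, rfl⟩ := hu; obtain ⟨y, rfl⟩ := hv
          rw [mul_comm]
          exact dp21_mem_S3 B y x
      · have hb1 : b ≤ 1 := by omega
        interval_cases b
        · rcases hv with rfl
          rw [mul_one]
          exact Submodule.subset_span hu
        · -- 2 * 1
          obtain ⟨x, rfl⟩ := hu; obtain ⟨y, rfl⟩ := hv
          exact dp21_mem_S3 B x y
      · have hb0 : b = 0 := by omega
        subst hb0
        rcases hv with rfl
        rw [mul_one]
        exact Submodule.subset_span hu

lemma dp_pow_mem (a : ℕ × B) (k : ℕ) (h : k * a.1 ≤ 3) :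
    (dp B a.1 a.2) ^ k ∈ S B (k * a.1) := by
  obtain ⟨n, x⟩ := a
  rcases Nat.eq_zero_or_pos k with rfl | hk
  · simpa using one_mem_S0 B
  rcases Nat.eq_zero_or_pos n with rfl | hn
  · simp only [Nat.mul_zero]
    rw [dp_zero, one_pow]
    exact one_mem_S0 B
  · simp only at h ⊢
    have hn3 : n ≤ 3 := le_trans (Nat.le_mul_of_pos_left n hk) h
    have h2 : dp B 1 x ^ 2 = 2 • dp B 2 x := by
      rw [pow_two, dp_mul]; norm_num
    interval_cases n
    · -- n = 1
      have hk3 : k ≤ 3 := by omega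
      interval_cases k
      · rw [pow_one]; exact dp1_mem_S1 B x
      · rw [h2]; exact Submodule.smul_mem _ _ (dp2_mem_S2 B x)
      · have h3 : dp B 1 x ^ 3 = 2 • (dp B 1 x * dp B 2 x) := by
          rw [pow_succ' (dp B 1 x) 2, h2, mul_smul_comm]
        rw [h3, dp_one_mul_two]
        exact Submodule.smul_mem _ _ (Submodule.smul_mem _ _ (dp3_mem_S3 B x))
    · -- n = 2
      have hk1 : k ≤ 1 := by omega
      interval_cases k
      rw [pow_one]; exact dp2_mem_S2 B x
    · -- n = 3
      have hk1 : k ≤ 1 := by omega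
      interval_cases k
      rw [pow_one]; exact dp3_mem_S3 B x


local notation "wt" => (Finsupp.weight (Prod.fst : ℕ × B → ℕ))

lemma weight_single (a : ℕ × B) (k : ℕ) : wt (Finsupp.single a k) = k * a.1 := by
  simp [Finsupp.weight_apply, Finsupp.sum_single_index, smul_eq_mul]

lemma monomial_mem (d : (ℕ × B) →₀ ℕ) (h : wt d ≤ 3) :
    RingQuot.mkAlgHom ℤ (DividedPowerRel B) (monomial d 1) ∈ S B (wt d) := by
  induction d using Finsupp.induction with
  | zero =>
    rw [map_zero]
    have : monomial (0 : (ℕ × B) →₀ ℕ) (1 : ℤ) = 1 := rfl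
    rw [this, map_one]
    exact one_mem_S0 B
  | single_add a k f _ hk ih =>
    rw [map_add (Finsupp.weight _)] at h ⊢
    rw [weight_single] at h ⊢
    have hf : wt f ≤ 3 := by omega
    have hs : k * a.1 ≤ 3 := by omega
    have : monomial (Finsupp.single a k + f) (1 : ℤ) =
        monomial (Finsupp.single a k) 1 * monomial f 1 := by
      rw [monomial_mul, one_mul]
    rw [this, map_mul, ← X_pow_eq_monomial, map_pow]
    have hX : RingQuot.mkAlgHom ℤ (DividedPowerRel B) (X a) = dp B a.1 a.2 := rfl
    rw [hX]
    exact S_mul B (by omega) (dp_pow_mem B a k hs) (ih hf)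

lemma grade_le_S (n : ℕ) (h : n ≤ 3) : dpGrade B n ≤ S B n := by
  rintro v ⟨p, hp, rfl⟩
  replace hp : p.IsWeightedHomogeneous Prod.fst n := hp
  have hrep : ∑ d ∈ p.support, monomial d (coeff d p) = p := support_sum_monomial_coeff p
  change RingQuot.mkAlgHom ℤ (DividedPowerRel B) p ∈ S B n
  rw [← hrep, map_sum]
  apply Submodule.sum_mem
  intro d hd
  have hdw : wt d = n := hp (mem_support_iff.mp hd)
  have : monomial d (coeff d p) = (coeff d p) • monomial d (1 : ℤ) := by
    rw [smul_monomial, smul_eq_mul, mul_one]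
  rw [this, map_smul]
  refine Submodule.smul_mem _ _ ?_
  rw [← hdw]
  exact monomial_mem B d (by omega)

lemma S2_le_grade : S B 2 ≤ dpGrade B 2 := by
  rw [S, Submodule.span_le]
  rintro v ⟨x, rfl⟩
  exact dp_mem_dpGrade B 2 x

lemma S3_le_grade : S B 3 ≤ dpGrade B 3 := by
  rw [S, Submodule.span_le]
  rintro v (⟨x, rfl⟩ | ⟨x, y, rfl⟩)
  · exact dp_mem_dpGrade B 3 x
  · exact dp_mul_dp_mem_dpGrade B 2 1 x y

lemma grade2_eq : dpGrade B 2 = S B 2 :=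
  le_antisymm (grade_le_S B 2 (by omega)) (S2_le_grade B)

lemma grade3_eq : dpGrade B 3 = S B 3 :=
  le_antisymm (grade_le_S B 3 (by omega)) (S3_le_grade B)


lemma grade_mul {a b : ℕ} {u v : DividedPowerAlgebra' B} (hu : u ∈ dpGrade B a)
    (hv : v ∈ dpGrade B b) : u * v ∈ dpGrade B (a + b) := by
  obtain ⟨p, hp, rfl⟩ := hu
  obtain ⟨q, hq, rfl⟩ := hv
  exact ⟨p * q, (mem_weightedHomogeneousSubmodule _ _ _ _).mpr
    (((mem_weightedHomogeneousSubmodule _ _ _ _).mp hp).mul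
      ((mem_weightedHomogeneousSubmodule _ _ _ _).mp hq)), by
        exact map_mul (RingQuot.mkAlgHom ℤ (DividedPowerRel B)) _ _⟩

lemma dpOne_linear : IsLinearMap ℤ (fun y => dp B 1 y) :=
  ⟨fun x y => dp_one_add B x y, fun k y => by rw [dp_smul, pow_one]⟩

/-- the bilinear multiplication map `Γ₂B × B → Γ₃B` -/
noncomputable def mulBil : dpGrade B 2 →ₗ[ℤ] B →ₗ[ℤ] dpGrade B 3 where
  toFun t :=
    { toFun := fun y => ⟨(t : DividedPowerAlgebra' B) * dp B 1 y,
        grade_mul B t.2 (dp_mem_dpGrade B 1 y)⟩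
      map_add' := fun y z => by
        ext
        simp only [Submodule.coe_add]
        rw [dp_one_add, mul_add]
      map_smul' := fun k y => by
        ext
        simp only [RingHom.id_apply, SetLike.val_smul]
        rw [dp_smul, pow_one, mul_smul_comm] }
  map_add' t s := by
    ext y
    simp only [LinearMap.coe_mk, AddHom.coe_mk, LinearMap.add_apply, Submodule.coe_add]
    rw [add_mul]
  map_smul' k t := by
    ext y
    simp only [LinearMap.coe_mk, AddHom.coe_mk, RingHom.id_apply, LinearMap.smul_apply,
      SetLike.val_smul]
    rw [smul_mul_assoc]

open TensorProduct in
/-- the multiplication map `Γ₂B ⊗ B → Γ₃B` -/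
noncomputable def mmap : (dpGrade B 2) ⊗[ℤ] B →ₗ[ℤ] dpGrade B 3 :=
  TensorProduct.lift (mulBil B)

lemma mmap_tmul (t : dpGrade B 2) (y : B) :
    mmap B (t ⊗ₜ[ℤ] y) = ⟨(t : DividedPowerAlgebra' B) * dp B 1 y,
      grade_mul B t.2 (dp_mem_dpGrade B 1 y)⟩ := rfl

lemma dp21_mem_range (x y : B) (h : dp B 2 x * dp B 1 y ∈ dpGrade B 3) :
    (⟨dp B 2 x * dp B 1 y, h⟩ : dpGrade B 3) ∈ LinearMap.range (mmap B) :=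
  ⟨(⟨dp B 2 x, dp_mem_dpGrade B 2 x⟩ : dpGrade B 2) ⊗ₜ[ℤ] y, rfl⟩

lemma gmap_comp_mmap : ∀ u, gmap B (mmap B u) = 0 := by
  intro u
  induction u with
  | zero => simp
  | add a b ha hb => rw [map_add, map_add, ha, hb, add_zero]
  | tmul t y =>
    rw [mmap_tmul]
    show (TrivSqZeroExt.sndHom ℤ (modThree B)) (psi B ((t : DividedPowerAlgebra' B) * dp B 1 y)) = 0
    rw [map_mul, psi_dp_one, mul_zero, map_zero]


/-- extensionality on `Γ₃B` via the spanning set -/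
lemma ext_on_grade3 {N : Type*} [AddCommGroup N] [Module ℤ N]
    (F G : dpGrade B 3 →ₗ[ℤ] N)
    (h3 : ∀ (x : B) (h : dp B 3 x ∈ dpGrade B 3), F ⟨dp B 3 x, h⟩ = G ⟨dp B 3 x, h⟩)
    (h21 : ∀ (x y : B) (h : dp B 2 x * dp B 1 y ∈ dpGrade B 3),
      F ⟨dp B 2 x * dp B 1 y, h⟩ = G ⟨dp B 2 x * dp B 1 y, h⟩) : F = G := by
  ext ξ
  obtain ⟨v, hv⟩ := ξ
  have hs : v ∈ Submodule.span ℤ (SGen B 3) := (grade3_eq B).le hv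
  revert hv
  induction hs using Submodule.span_induction with
  | mem w hw =>
    intro hv
    rcases hw with ⟨x, rfl⟩ | ⟨x, y, rfl⟩
    · exact h3 x hv
    · exact h21 x y hv
  | zero =>
    intro hv
    have : (⟨0, hv⟩ : dpGrade B 3) = 0 := rfl
    rw [this, map_zero, map_zero]
  | add w₁ w₂ hw₁ hw₂ ih₁ ih₂ =>
    intro hv
    have m₁ : w₁ ∈ dpGrade B 3 := S3_le_grade B hw₁
    have m₂ : w₂ ∈ dpGrade B 3 := S3_le_grade B hw₂
    have : (⟨w₁ + w₂, hv⟩ : dpGrade B 3) = ⟨w₁, m₁⟩ + ⟨w₂, m₂⟩ := rfl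
    rw [this, map_add, map_add, ih₁ m₁, ih₂ m₂]
  | smul c w hw ih =>
    intro hv
    have m : w ∈ dpGrade B 3 := S3_le_grade B hw
    have : (⟨c • w, hv⟩ : dpGrade B 3) = c • ⟨w, m⟩ := rfl
    rw [this, LinearMap.map_smul, LinearMap.map_smul, ih m]

lemma three_smul_sub (x : B) (h : ((3:ℤ) • dp B 3 x) ∈ dpGrade B 3) :
    (⟨(3:ℤ) • dp B 3 x, h⟩ : dpGrade B 3) ∈ LinearMap.range (mmap B) := by
  have hval : (3:ℤ) • dp B 3 x = dp B 2 x * dp B 1 x := by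
    rw [mul_comm, dp_one_mul_two]
    norm_num
  refine ⟨(⟨dp B 2 x, dp_mem_dpGrade B 2 x⟩ : dpGrade B 2) ⊗ₜ[ℤ] x, ?_⟩
  rw [mmap_tmul]
  exact Subtype.ext hval.symm

/-- the additive map `B → Γ₃B / image` sending `x` to the class of `γ₃(x)` -/
noncomputable def delta : B →ₗ[ℤ] (dpGrade B 3 ⧸ LinearMap.range (mmap B)) :=
  (AddMonoidHom.mk'
    (fun x => Submodule.mkQ _ ⟨dp B 3 x, dp_mem_dpGrade B 3 x⟩)
    (by
      intro x y
      have key : (⟨dp B 3 (x + y), dp_mem_dpGrade B 3 (x + y)⟩ : dpGrade B 3) =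
          ⟨dp B 3 x, dp_mem_dpGrade B 3 x⟩ + ⟨dp B 3 y, dp_mem_dpGrade B 3 y⟩ +
          (mmap B ((⟨dp B 2 y, dp_mem_dpGrade B 2 y⟩ : dpGrade B 2) ⊗ₜ[ℤ] x) +
           mmap B ((⟨dp B 2 x, dp_mem_dpGrade B 2 x⟩ : dpGrade B 2) ⊗ₜ[ℤ] y)) := by
        apply Subtype.ext
        show dp B 3 (x + y) = dp B 3 x + dp B 3 y + (dp B 2 y * dp B 1 x + dp B 2 x * dp B 1 y)
        rw [dp_three_add, mul_comm (dp B 1 x) (dp B 2 y)]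
        ring
      rw [key, map_add, map_add]
      have hz : Submodule.mkQ (LinearMap.range (mmap B))
          (mmap B ((⟨dp B 2 y, dp_mem_dpGrade B 2 y⟩ : dpGrade B 2) ⊗ₜ[ℤ] x) +
           mmap B ((⟨dp B 2 x, dp_mem_dpGrade B 2 x⟩ : dpGrade B 2) ⊗ₜ[ℤ] y)) = 0 := by
        rw [Submodule.mkQ_apply, Submodule.Quotient.mk_eq_zero]
        exact Submodule.add_mem _ (LinearMap.mem_range_self _ _) (LinearMap.mem_range_self _ _)
      rw [hz, add_zero])).toIntLinearMap

lemma delta_apply (x : B) :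
    delta B x = Submodule.mkQ _ ⟨dp B 3 x, dp_mem_dpGrade B 3 x⟩ := rfl

/-- the section `B/3B → Γ₃B / image` -/
noncomputable def hQ : modThree B →ₗ[ℤ] (dpGrade B 3 ⧸ LinearMap.range (mmap B)) :=
  Submodule.liftQ _ (delta B) (by
    rintro _ ⟨z, rfl⟩
    rw [LinearMap.mem_ker]
    have : ((3:ℤ) • (LinearMap.id : B →ₗ[ℤ] B)) z = (3:ℤ) • z := rfl
    rw [this, map_smul, delta_apply, ← map_smul, Submodule.mkQ_apply,
      Submodule.Quotient.mk_eq_zero]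
    exact three_smul_sub B z _)

lemma retract : (hQ B).comp (gmap B) = Submodule.mkQ (LinearMap.range (mmap B)) := by
  apply ext_on_grade3
  · intro x h
    rw [LinearMap.comp_apply, gmap_dp3]
    show Submodule.liftQ _ (delta B) _ (Submodule.Quotient.mk x) = _
    rw [Submodule.liftQ_apply, delta_apply]
  · intro x y h
    rw [LinearMap.comp_apply, gmap_dp21, map_zero, Submodule.mkQ_apply, eq_comm,
      Submodule.Quotient.mk_eq_zero]
    exact dp21_mem_range B x y h


lemma g'_dp21 (g' : dpGrade B 3 →ₗ[ℤ] modThree B)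
    (hg' : ∀ x : B, g' ⟨dp B 3 x, dp_mem_dpGrade B 3 x⟩ = Submodule.Quotient.mk x)
    (x y : B) (h : dp B 2 x * dp B 1 y ∈ dpGrade B 3) :
    g' ⟨dp B 2 x * dp B 1 y, h⟩ = 0 := by
  set A : B → B → modThree B := fun u v =>
    g' ⟨dp B 2 u * dp B 1 v, dp_mul_dp_mem_dpGrade B 2 1 u v⟩ with hA
  have hgen : g' ⟨dp B 2 x * dp B 1 y, h⟩ = A x y := rfl
  -- antisymmetry
  have hanti : ∀ u v : B, A u v + A v u = 0 := by
    intro u v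
    have key : (⟨dp B 3 (u + v), dp_mem_dpGrade B 3 (u + v)⟩ : dpGrade B 3) =
        ⟨dp B 3 u, dp_mem_dpGrade B 3 u⟩ + ⟨dp B 3 v, dp_mem_dpGrade B 3 v⟩ +
        (⟨dp B 2 u * dp B 1 v, dp_mul_dp_mem_dpGrade B 2 1 u v⟩ +
         ⟨dp B 2 v * dp B 1 u, dp_mul_dp_mem_dpGrade B 2 1 v u⟩) := by
      apply Subtype.ext
      show dp B 3 (u + v) = dp B 3 u + dp B 3 v +
        (dp B 2 u * dp B 1 v + dp B 2 v * dp B 1 u)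
      rw [dp_three_add, mul_comm (dp B 1 u) (dp B 2 v)]
      ring
    have := congrArg g' key
    rw [map_add, map_add, map_add, hg', hg', hg'] at this
    rw [Submodule.Quotient.mk_add] at this
    have h2 : A u v + A v u =
        (Submodule.Quotient.mk u + Submodule.Quotient.mk v) -
        (Submodule.Quotient.mk u + Submodule.Quotient.mk v) := by
      nth_rewrite 1 [this]
      abel
    rw [sub_self] at h2
    exact h2
  -- scaling
  have hscale1 : ∀ u v : B, A u ((2:ℤ) • v) = (2:ℤ) • A u v := by
    intro u v
    have key : (⟨dp B 2 u * dp B 1 ((2:ℤ) • v), dp_mul_dp_mem_dpGrade B 2 1 u _⟩ : dpGrade B 3) =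
        (2:ℤ) • ⟨dp B 2 u * dp B 1 v, dp_mul_dp_mem_dpGrade B 2 1 u v⟩ := by
      apply Subtype.ext
      show dp B 2 u * dp B 1 ((2:ℤ) • v) = (2:ℤ) • (dp B 2 u * dp B 1 v)
      rw [dp_smul, pow_one, mul_smul_comm]
    rw [hA]
    simp only
    rw [key, LinearMap.map_smul]
  have hscale2 : ∀ u v : B, A ((2:ℤ) • u) v = (4:ℤ) • A u v := by
    intro u v
    have key : (⟨dp B 2 ((2:ℤ) • u) * dp B 1 v, dp_mul_dp_mem_dpGrade B 2 1 _ v⟩ : dpGrade B 3) =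
        (4:ℤ) • ⟨dp B 2 u * dp B 1 v, dp_mul_dp_mem_dpGrade B 2 1 u v⟩ := by
      apply Subtype.ext
      show dp B 2 ((2:ℤ) • u) * dp B 1 v = (4:ℤ) • (dp B 2 u * dp B 1 v)
      rw [dp_smul, smul_mul_assoc]
      norm_num
    rw [hA]
    simp only
    rw [key, LinearMap.map_smul]
  have hneg : ∀ u v : B, A u v = - A v u := fun u v => by
    have := hanti u v; linear_combination (norm := abel) this
  have h2A : (2:ℤ) • A x y = 0 := by
    have e1 : A ((2:ℤ) • x) y = (4:ℤ) • A x y := hscale2 x y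
    have e2 : A ((2:ℤ) • x) y = (2:ℤ) • A x y := by
      rw [hneg ((2:ℤ) • x) y, hscale1 y x, hneg y x]
      module
    have : (4:ℤ) • A x y = (2:ℤ) • A x y := by rw [← e1, e2]
    have h4 : (4:ℤ) • A x y - (2:ℤ) • A x y = 0 := by rw [this, sub_self]
    have : (2:ℤ) • A x y = (4:ℤ) • A x y - (2:ℤ) • A x y := by module
    rw [this, h4]
  have h3A : (3:ℤ) • A x y = 0 := three_smul_modThree B _
  have : A x y = (3:ℤ) • A x y - (2:ℤ) • A x y := by module
  rw [hgen, this, h2A, h3A, sub_self]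

lemma g'_eq (g' : dpGrade B 3 →ₗ[ℤ] modThree B)
    (hg' : ∀ x : B, g' ⟨dp B 3 x, dp_mem_dpGrade B 3 x⟩ = Submodule.Quotient.mk x) :
    g' = gmap B := by
  apply ext_on_grade3
  · intro x h
    rw [gmap_dp3]
    exact hg' x
  · intro x y h
    rw [gmap_dp21]
    exact g'_dp21 B g' hg' x y h

end DPA

open TensorProduct in
/-- There is a unique homomorphism `Γ₃B → B/3B` sending `γ₃(x)` to `x + 3B`; it is
surjective, and its kernel is exactly the image of the multiplication map
`Γ₂B ⊗ B → Γ₃B` sending `γ₂(x) ⊗ y` to `γ₂(x)·γ₁(y)`.  In other words, the sequence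
`Γ₂B ⊗ B → Γ₃B → B/3B → 0` is exact. -/
theorem dpGradeTwo_tensor_dpGradeThree_modThree_exact :
    (∃! g : dpGrade B 3 →ₗ[ℤ] modThree B,
      ∀ x : B, g ⟨dp B 3 x, dp_mem_dpGrade B 3 x⟩ = Submodule.Quotient.mk x) ∧
    ∀ g : dpGrade B 3 →ₗ[ℤ] modThree B,
      (∀ x : B, g ⟨dp B 3 x, dp_mem_dpGrade B 3 x⟩ = Submodule.Quotient.mk x) →
        Function.Surjective g ∧
        ∃ m : ((dpGrade B 2) ⊗[ℤ] B) →ₗ[ℤ] dpGrade B 3,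
          (∀ x y : B,
            m ((⟨dp B 2 x, dp_mem_dpGrade B 2 x⟩ : dpGrade B 2) ⊗ₜ[ℤ] y) =
              ⟨dp B 2 x * dp B 1 y, dp_mul_dp_mem_dpGrade B 2 1 x y⟩) ∧
          LinearMap.range m = LinearMap.ker g := by
  constructor
  · exact ⟨DPA.gmap B, fun x => DPA.gmap_dp3 B x _, fun g' hg' => DPA.g'_eq B g' hg'⟩
  · intro g hg
    have hgeq : g = DPA.gmap B := DPA.g'_eq B g hg
    subst hgeq
    refine ⟨?_, DPA.mmap B, fun x y => rfl, ?_⟩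
    · intro c
      obtain ⟨x, rfl⟩ := Submodule.Quotient.mk_surjective _ c
      exact ⟨⟨dp B 3 x, dp_mem_dpGrade B 3 x⟩, DPA.gmap_dp3 B x _⟩
    · apply le_antisymm
      · rintro _ ⟨u, rfl⟩
        exact LinearMap.mem_ker.mpr (DPA.gmap_comp_mmap B u)
      · intro ξ hξ
        have hr := LinearMap.congr_fun (DPA.retract B) ξ
        have h0 : DPA.gmap B ξ = 0 := LinearMap.mem_ker.mp hξ
        have : Submodule.mkQ (LinearMap.range (DPA.mmap B)) ξ = 0 := by
          rw [← hr, LinearMap.comp_apply, h0, map_zero]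
        rwa [Submodule.mkQ_apply, Submodule.Quotient.mk_eq_zero] at this
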